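/- (Reduction of combining to non-combining collectives, solution direction.) Consider a combining instance with identifiers: I ≥ 1 identifiers, surjective chunk map χ : Fin I → Fin G, topology cap, pre, post ⊆ Fin I × Fin P, and S steps. Assume (a) every identifier has exactly one pre node: for all i there is a unique n with (i,n) ∈ pre, and (b) the single-root condition: there is a function root : Fin G → Fin P such that post = {(i, root(χ(i))) : i ∈ Fin I}. Form the reversed non-combining instance on the same P nodes with chunk set Fin G, identity chunk map, topology capᵀ, precondition pre′ = {(χ(i), n) : (i,n) ∈ post} and postcondition post′ = {(χ(i), n) : (i,n) ∈ pre}. If T′ with round sequence q_0,…,q_{S−1} is an exactly-once algorithm for the reversed instance, then 𝓡(T′) with the reversed round sequence q_{S−1},…,q_0 is an exactly-once algorithm for the original instance (cap, pre, post). -/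

import Mathlib

/-- The bandwidth constraint: for every step `s` and ordered pair `(n,n')`, the number
of chunks `c` with `(c,n,n',s) ∈ T` is at most `cap n n' * r s`. -/
def BWOk {G P S : ℕ} (cap : Fin P → Fin P → ℕ)
    (T : Finset (Fin G × Fin P × Fin P × Fin S)) (r : Fin S → ℕ) : Prop :=
  ∀ s n n',
    (T.filter fun x => x.2.1 = n ∧ x.2.2.1 = n' ∧ x.2.2.2 = s).card ≤ cap n n' * r s

open Classical in
/-- The counting run of a chunk-keyed candidate `T` on identifiers, via the chunk map `χ`:
`cnt_0(i,n) = 1` iff `(i,n) ∈ pre`, and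
`cnt_{s+1}(i,n) = cnt_s(i,n) + Σ_{n' : (χ i, n', n, s) ∈ T} cnt_s(i,n')`. -/
noncomputable def cntI {I G P S : ℕ} (χ : Fin I → Fin G) (pre : Set (Fin I × Fin P))
    (T : Finset (Fin G × Fin P × Fin P × Fin S)) : ℕ → Fin I → Fin P → ℕ
  | 0, i, n => if (i, n) ∈ pre then 1 else 0
  | s + 1, i, n =>
      cntI χ pre T s i n +
        if h : s < S then
          ∑ n' : Fin P, if (χ i, n', n, ⟨s, h⟩) ∈ T then cntI χ pre T s i n' else 0
        else 0

/-- `T` with round sequence `r` is an exactly-once algorithm for `(cap, pre, post)`: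
`cnt_S(i,n) = 1` for every `(i,n) ∈ post`, and the bandwidth constraints hold. -/
def ExactlyOnce {I G P S : ℕ} (χ : Fin I → Fin G) (cap : Fin P → Fin P → ℕ)
    (pre post : Set (Fin I × Fin P)) (T : Finset (Fin G × Fin P × Fin P × Fin S))
    (r : Fin S → ℕ) : Prop :=
  (∀ q ∈ post, cntI χ pre T S q.1 q.2 = 1) ∧ BWOk cap T r

/-- The reversal `𝓡(T) = {(c, n', n, S−1−s) : (c, n, n', s) ∈ T}` of a candidate. -/
def revT {G P S : ℕ} (T : Finset (Fin G × Fin P × Fin P × Fin S)) :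
    Finset (Fin G × Fin P × Fin P × Fin S) :=
  T.image fun x => (x.1, x.2.2.1, x.2.1, x.2.2.2.rev)

/-!
For a fixed identifier `i` with chunk `c = χ i`, one step of the counting run of `𝓡(T')` acts on
the vector `cnt(i, ·)` by the transpose of the matrix by which the step `S-1-s` of `T'` acts on
`cnt'(c, ·)`. Hence the pairing `Σₘ cnt_s(i,m) · cnt'_{S-s}(c,m)` does not depend on `s`.
At `s = S` the vector `cnt'_0(c,·)` is the indicator of the root, so the pairing is
`cnt_S(i, root c)`; at `s = 0` the vector `cnt_0(i,·)` is the indicator of the unique pre node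
`n₀` of `i`, so the pairing is `cnt'_S(c, n₀) = 1` because `(c, n₀)` lies in the reversed
postcondition.
-/

open Finset

section CountingRun

variable {I J G P S : ℕ}

@[simp]
lemma mem_revT (T : Finset (Fin G × Fin P × Fin P × Fin S)) (c : Fin G) (a b : Fin P)
    (t : Fin S) : (c, a, b, t) ∈ revT T ↔ (c, b, a, t.rev) ∈ T := by
  constructor
  · intro hm
    obtain ⟨⟨c', a', b', t'⟩, hx, heq⟩ := mem_image.mp hm
    simp only [Prod.mk.injEq] at heq
    obtain ⟨rfl, rfl, rfl, rfl⟩ := heq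
    simpa using hx
  · exact fun hm => mem_image.mpr ⟨(c, b, a, t.rev), hm, by simp⟩

open Classical in
lemma cntI_zero (χ : Fin I → Fin G) (pre : Set (Fin I × Fin P))
    (T : Finset (Fin G × Fin P × Fin P × Fin S)) (i : Fin I) (n : Fin P) :
    cntI χ pre T 0 i n = if (i, n) ∈ pre then 1 else 0 := by
  rw [cntI]

open Classical in
lemma cntI_succ (χ : Fin I → Fin G) (pre : Set (Fin I × Fin P))
    (T : Finset (Fin G × Fin P × Fin P × Fin S)) (s : Fin S) (i : Fin I) (n : Fin P) :
    cntI χ pre T (s + 1) i n = cntI χ pre T s i n +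
      ∑ n' : Fin P, if (χ i, n', n, s) ∈ T then cntI χ pre T s i n' else 0 := by
  rw [cntI, dif_pos s.isLt]

lemma sum_cntI_zero_mul (χ : Fin I → Fin G) (pre : Set (Fin I × Fin P))
    (T : Finset (Fin G × Fin P × Fin P × Fin S)) {i : Fin I} {n : Fin P}
    (hn : ∀ m, (i, m) ∈ pre ↔ m = n) (f : Fin P → ℕ) :
    ∑ m : Fin P, cntI χ pre T 0 i m * f m = f n := by
  simp [cntI_zero, hn]

lemma sum_cntI_revT_mul_cntI_succ (χ : Fin I → Fin G) (χ' : Fin J → Fin G)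
    (pre : Set (Fin I × Fin P)) (pre' : Set (Fin J × Fin P))
    (T : Finset (Fin G × Fin P × Fin P × Fin S)) {i : Fin I} {j : Fin J} (hij : χ i = χ' j)
    (s : Fin S) :
    ∑ m : Fin P, cntI χ pre (revT T) (s + 1) i m * cntI χ' pre' T (S - (s + 1)) j m =
      ∑ m : Fin P, cntI χ pre (revT T) s i m * cntI χ' pre' T (S - s) j m := by
  have hrev : S - (s + 1) = s.rev := by rw [Fin.val_rev]
  have hrev_succ : S - s = s.rev + 1 := by rw [Fin.val_rev]; omega
  rw [hrev, hrev_succ]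
  simp only [cntI_succ, mem_revT, hij, add_mul, mul_add, sum_add_distrib, sum_mul, mul_sum,
    ite_mul, mul_ite, zero_mul, mul_zero]
  congr 1
  rw [sum_comm]

lemma sum_cntI_revT_mul_cntI (χ : Fin I → Fin G) (χ' : Fin J → Fin G)
    (pre : Set (Fin I × Fin P)) (pre' : Set (Fin J × Fin P))
    (T : Finset (Fin G × Fin P × Fin P × Fin S)) {i : Fin I} {j : Fin J} (hij : χ i = χ' j) :
    ∑ m : Fin P, cntI χ pre (revT T) S i m * cntI χ' pre' T 0 j m =
      ∑ m : Fin P, cntI χ pre (revT T) 0 i m * cntI χ' pre' T S j m := by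
  have invariant : ∀ s ≤ S,
      ∑ m : Fin P, cntI χ pre (revT T) s i m * cntI χ' pre' T (S - s) j m =
        ∑ m : Fin P, cntI χ pre (revT T) 0 i m * cntI χ' pre' T S j m := by
    intro s
    induction s with
    | zero => simp
    | succ k ih =>
      intro hk
      rw [← ih (by omega)]
      exact sum_cntI_revT_mul_cntI_succ χ χ' pre pre' T hij ⟨k, hk⟩
  simpa using invariant S le_rfl

end CountingRun

lemma BWOk.revT {G P S : ℕ} {cap : Fin P → Fin P → ℕ}
    {T : Finset (Fin G × Fin P × Fin P × Fin S)} {q : Fin S → ℕ}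
    (h : BWOk (fun n n' => cap n' n) T q) : BWOk cap (revT T) (fun s => q s.rev) := by
  intro s n n'
  refine le_trans ?_ (h s.rev n' n)
  rw [_root_.revT, filter_image]
  refine (card_image_le).trans (card_le_card fun x hx => ?_)
  simp only [mem_filter] at hx ⊢
  obtain ⟨hx, rfl, rfl, rfl⟩ := hx
  simp [hx]

theorem combining_reduction_solution_general
    {I G P S : ℕ}
    (χ : Fin I → Fin G)
    (cap : Fin P → Fin P → ℕ) (pre post : Set (Fin I × Fin P))
    (hpre : ∀ i : Fin I, ∃! n : Fin P, (i, n) ∈ pre)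
    (root : Fin G → Fin P) (hpost : post = {q : Fin I × Fin P | q.2 = root (χ q.1)})
    (T' : Finset (Fin G × Fin P × Fin P × Fin S)) (q : Fin S → ℕ)
    (h : ExactlyOnce (id : Fin G → Fin G) (fun n n' => cap n' n)
      ((fun p : Fin I × Fin P => (χ p.1, p.2)) '' post)
      ((fun p : Fin I × Fin P => (χ p.1, p.2)) '' pre) T' q) :
    ExactlyOnce χ cap pre post (revT T') (fun s => q s.rev) := by
  obtain ⟨hcnt, hbw⟩ := h
  refine ⟨?_, hbw.revT⟩
  rintro ⟨i, n⟩ hin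
  obtain rfl : n = root (χ i) := by simpa [hpost] using hin
  obtain ⟨n₀, hn₀, huniq⟩ := hpre i
  have root_unique : ∀ m, (χ i, m) ∈ (fun p : Fin I × Fin P => (χ p.1, p.2)) '' post ↔
      m = root (χ i) := fun m => by
    subst hpost
    refine ⟨?_, fun hm => ⟨(i, m), hm, rfl⟩⟩
    rintro ⟨⟨i', m'⟩, hm' : m' = root (χ i'), he⟩
    obtain ⟨hχ, rfl⟩ := Prod.mk.inj he
    rw [hm', hχ]
  calc cntI χ pre (revT T') S i (root (χ i))
      = ∑ m, cntI χ pre (revT T') S i m * cntI id _ T' 0 (χ i) m := by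
        rw [sum_congr rfl fun m _ => mul_comm _ _, sum_cntI_zero_mul id _ T' root_unique]
    _ = ∑ m, cntI χ pre (revT T') 0 i m * cntI id _ T' S (χ i) m :=
        sum_cntI_revT_mul_cntI χ id pre _ T' rfl
    _ = 1 := by
        rw [sum_cntI_zero_mul χ pre _ (fun m => ⟨huniq m, fun h => h ▸ hn₀⟩)]
        exact hcnt _ ⟨(i, n₀), hn₀, rfl⟩

/-- Reduction of combining to non-combining collectives, solution direction: an exactly-once
algorithm `T'` (with rounds `q`) for the reversed non-combining instance
`(capᵀ, pre', post')` yields the exactly-once algorithm `𝓡(T')` (with reversed rounds)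
for the original combining instance `(cap, pre, post)`. -/
theorem combining_reduction_solution
    {I G P S : ℕ} (hI : 1 ≤ I) (hG : 1 ≤ G) (hP : 1 ≤ P)
    (χ : Fin I → Fin G) (hχ : Function.Surjective χ)
    (cap : Fin P → Fin P → ℕ) (pre post : Set (Fin I × Fin P))
    (hpre : ∀ i : Fin I, ∃! n : Fin P, (i, n) ∈ pre)
    (root : Fin G → Fin P) (hpost : post = {q : Fin I × Fin P | q.2 = root (χ q.1)})
    (T' : Finset (Fin G × Fin P × Fin P × Fin S)) (q : Fin S → ℕ)
    (h : ExactlyOnce (id : Fin G → Fin G) (fun n n' => cap n' n)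
      ((fun p : Fin I × Fin P => (χ p.1, p.2)) '' post)
      ((fun p : Fin I × Fin P => (χ p.1, p.2)) '' pre) T' q) :
    ExactlyOnce χ cap pre post (revT T') (fun s => q s.rev) :=
  combining_reduction_solution_general χ cap pre post hpre root hpost T' q h
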